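/- arXiv:2310.12738 — 5 statements merged into one kernel-verified Lean document; each statement's English description precedes it below -/
import Mathlib

section
/- Let G be a Lie group and ⟨·,·⟩: 𝔤 ⊗ 𝔤 → 𝔱 an Ad-invariant symmetric bilinear map. Define ν := −⟨pr₁*θ^L ∧ pr₂*θ^R⟩ ∈ Ω²(G×G,𝔱). Then ν satisfies the simplicial cocycle identity on G³: pr₂₃*ν − (m×id)*ν + (id×m)*ν − pr₁₂*ν = 0, where m is group multiplication. -/
/-!
STATEMENT 2: Let G be a Lie group and ⟨·,·⟩: 𝔤 ⊗ 𝔤 → 𝔱 an Ad-invariant symmetric bilinear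
map.  Define ν := −⟨pr₁*θ^L ∧ pr₂*θ^R⟩ ∈ Ω²(G×G,𝔱).  Then ν satisfies the simplicial
cocycle identity on G³: pr₂₃*ν − (m×id)*ν + (id×m)*ν − pr₁₂*ν = 0.

We work with the linear Lie group G = Mˣ of units of a complete normed ℝ-algebra M; tangent
vectors at a point of G³ ⊆ M×M×M are triples, and the pushforward of (x₁,x₂,x₃) under
m×id (resp. id×m) is (x₁·g₂ + g₁·x₂, x₃) (resp. (x₁, x₂·g₃ + g₂·x₃)).
-/

noncomputable section

/-- The left Maurer–Cartan form θ^L: at `x` it sends `v ↦ x⁻¹ * v`. -/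
def thetaL (M : Type*) [NormedRing M] [NormedAlgebra ℝ M] (x : M) : M →L[ℝ] M :=
  ContinuousLinearMap.mul ℝ M (Ring.inverse x)

/-- The right Maurer–Cartan form θ^R: at `x` it sends `v ↦ v * x⁻¹`. -/
def thetaR (M : Type*) [NormedRing M] [NormedAlgebra ℝ M] (x : M) : M →L[ℝ] M :=
  (ContinuousLinearMap.mul ℝ M).flip (Ring.inverse x)

/-- ν = −⟨pr₁*θ^L ∧ pr₂*θ^R⟩ at `p = (g₁,g₂)` on tangent vectors `u v` of G×G. -/
def nu2 {M t : Type*} [NormedRing M] [NormedAlgebra ℝ M]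
    [NormedAddCommGroup t] [NormedSpace ℝ t]
    (B : M →L[ℝ] M →L[ℝ] t) (p : M × M) (u v : M × M) : t :=
  -(B (thetaL M p.1 u.1) (thetaR M p.2 v.2) - B (thetaL M p.1 v.1) (thetaR M p.2 u.2))

/-!
Pulled back along `m × id`, the left Maurer–Cartan form splits as
`θ^L_{g₁g₂}(x₁g₂ + g₁x₂) = Ad_{g₂⁻¹}(θ^L x₁) + θ^L x₂`, and along `id × m` the right one splits as
`θ^R_{g₂g₃}(x₂g₃ + g₂x₃) = θ^R x₂ + Ad_{g₂}(θ^R x₃)`. Substituting, the terms of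
`pr₂₃*ν` and `pr₁₂*ν` cancel against the untwisted summands, and what remains is
`⟨Ad_{g₂⁻¹} θ^L x₁, θ^R y₃⟩ - ⟨θ^L x₁, Ad_{g₂} θ^R y₃⟩` (antisymmetrised), which vanishes by
Ad-invariance.
-/

section MaurerCartan

variable {M : Type*} [NormedRing M] [NormedAlgebra ℝ M]

theorem thetaL_units_apply (g : Mˣ) (x : M) : thetaL M g x = ↑g⁻¹ * x := by
  simp [thetaL]

theorem thetaR_units_apply (g : Mˣ) (x : M) : thetaR M g x = x * ↑g⁻¹ := by
  simp [thetaR]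

theorem thetaL_units_mul_apply_add (g₁ g₂ : Mˣ) (x₁ x₂ : M) :
    thetaL M (↑g₁ * ↑g₂) (x₁ * ↑g₂ + ↑g₁ * x₂) =
      ↑g₂⁻¹ * thetaL M g₁ x₁ * ↑g₂ + thetaL M g₂ x₂ := by
  rw [← Units.val_mul, thetaL_units_apply, thetaL_units_apply, thetaL_units_apply, mul_inv_rev]
  simp [mul_add, mul_assoc]

theorem thetaR_units_mul_apply_add (g₂ g₃ : Mˣ) (x₂ x₃ : M) :
    thetaR M (↑g₂ * ↑g₃) (x₂ * ↑g₃ + ↑g₂ * x₃) =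
      thetaR M g₂ x₂ + ↑g₂ * thetaR M g₃ x₃ * ↑g₂⁻¹ := by
  rw [← Units.val_mul, thetaR_units_apply, thetaR_units_apply, thetaR_units_apply, mul_inv_rev]
  simp [add_mul, mul_assoc]

end MaurerCartan

theorem apply_inv_conj_eq_apply_conj {M β : Type*} [Monoid M]
    (B : M → M → β) (hinv : ∀ (g : Mˣ) (u v : M), B (↑g * u * ↑g⁻¹) (↑g * v * ↑g⁻¹) = B u v)
    (g : Mˣ) (u v : M) : B (↑g⁻¹ * u * ↑g) v = B u (↑g * v * ↑g⁻¹) := by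
  rw [← hinv g]
  simp [mul_assoc]

theorem stmt2_general {M t : Type*} [NormedRing M] [NormedAlgebra ℝ M]
    [NormedAddCommGroup t] [NormedSpace ℝ t]
    (B : M →L[ℝ] M →L[ℝ] t)
    (hinv : ∀ (g : Mˣ) (u v : M), B (↑g * u * ↑g⁻¹) (↑g * v * ↑g⁻¹) = B u v) :
    ∀ (g₁ g₂ g₃ : Mˣ) (u v : M × M × M),
      -- pr₂₃*ν
      nu2 B ((↑g₂ : M), (↑g₃ : M)) (u.2.1, u.2.2) (v.2.1, v.2.2)
      -- − (m×id)*ν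
      - nu2 B ((↑g₁ : M) * ↑g₂, (↑g₃ : M))
          (u.1 * ↑g₂ + ↑g₁ * u.2.1, u.2.2) (v.1 * ↑g₂ + ↑g₁ * v.2.1, v.2.2)
      -- + (id×m)*ν
      + nu2 B ((↑g₁ : M), (↑g₂ : M) * ↑g₃)
          (u.1, u.2.1 * ↑g₃ + ↑g₂ * u.2.2) (v.1, v.2.1 * ↑g₃ + ↑g₂ * v.2.2)
      -- − pr₁₂*ν
      - nu2 B ((↑g₁ : M), (↑g₂ : M)) (u.1, u.2.1) (v.1, v.2.1) = 0 := by
  intro g₁ g₂ g₃ ⟨x₁, x₂, x₃⟩ ⟨y₁, y₂, y₃⟩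
  have hAd : ∀ u v, B (↑g₂⁻¹ * u * ↑g₂) v = B u (↑g₂ * v * ↑g₂⁻¹) :=
    apply_inv_conj_eq_apply_conj (fun u v => B u v) hinv g₂
  simp only [nu2]
  rw [thetaL_units_mul_apply_add, thetaL_units_mul_apply_add, thetaR_units_mul_apply_add,
    thetaR_units_mul_apply_add]
  simp only [map_add, add_apply, hAd]
  abel

theorem stmt2 {M t : Type*} [NormedRing M] [NormedAlgebra ℝ M] [CompleteSpace M]
    [NormedAddCommGroup t] [NormedSpace ℝ t]
    (B : M →L[ℝ] M →L[ℝ] t)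
    (hsymm : ∀ u v : M, B u v = B v u)
    (hinv : ∀ (g : Mˣ) (u v : M), B (↑g * u * ↑g⁻¹) (↑g * v * ↑g⁻¹) = B u v) :
    ∀ (g₁ g₂ g₃ : Mˣ) (u v : M × M × M),
      -- pr₂₃*ν
      nu2 B ((↑g₂ : M), (↑g₃ : M)) (u.2.1, u.2.2) (v.2.1, v.2.2)
      -- − (m×id)*ν
      - nu2 B ((↑g₁ : M) * ↑g₂, (↑g₃ : M))
          (u.1 * ↑g₂ + ↑g₁ * u.2.1, u.2.2) (v.1 * ↑g₂ + ↑g₁ * v.2.1, v.2.2)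
      -- + (id×m)*ν
      + nu2 B ((↑g₁ : M), (↑g₂ : M) * ↑g₃)
          (u.1, u.2.1 * ↑g₃ + ↑g₂ * u.2.2) (v.1, v.2.1 * ↑g₃ + ↑g₂ * v.2.2)
      -- − pr₁₂*ν
      - nu2 B ((↑g₁ : M), (↑g₂ : M)) (u.1, u.2.1) (v.1, v.2.1) = 0 :=
  stmt2_general B hinv

end
end

section
/- Let G be a Lie group, V a finite-dimensional vector space, and τ ∈ Ω¹(G×G,V) a 1-form satisfying the simplicial cocycle condition pr₂₃*τ − (m×id)*τ + (id×m)*τ − pr₁₂*τ = 0 on G³. Define κ: G × 𝔤 → V by κ(g,v) := τ_{(g⁻¹,1)}(0 ⊕ v) + τ_{(g⁻¹,g)}(dL_{g⁻¹}v ⊕ 0), where 0 ⊕ v and dL_{g⁻¹}v ⊕ 0 are tangent vectors to G×G. Then κ is a continuous group 1-cocycle with values in 𝔤* ⊗ V: κ(g₁g₂,v) = κ(g₁,v) + κ(g₂, Ad(g₁⁻¹)v) for all g₁,g₂ ∈ G, v ∈ 𝔤. -/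
/-!
Splitting the cocycle condition on `G³` along the three factors of the tangent vector gives three
identities between the components `τ_{(a,b)}(x, 0)` and `τ_{(a,b)}(0, y)`. Two of them bring
`κ = groupCocycleOfForm τ` to the form `κ(g, v) = τ_{(1,g)}(v, 0) - τ_{(g,1)}(0, Ad(g⁻¹) v)`, and in
this form the cocycle identity for `κ` is a signed sum of one instance of each of the three
identities.
-/

section

variable {M V : Type*} [Ring M] [AddCommGroup V]

def IsSimplicialCocycle (τ : M × M → (M × M →+ V)) : Prop :=
  ∀ (g₁ g₂ g₃ : Mˣ) (u : M × M × M),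
    τ ((↑g₂ : M), (↑g₃ : M)) (u.2.1, u.2.2)
      - τ ((↑g₁ : M) * ↑g₂, (↑g₃ : M)) (u.1 * ↑g₂ + ↑g₁ * u.2.1, u.2.2)
      + τ ((↑g₁ : M), (↑g₂ : M) * ↑g₃) (u.1, u.2.1 * ↑g₃ + ↑g₂ * u.2.2)
      - τ ((↑g₁ : M), (↑g₂ : M)) (u.1, u.2.1) = 0

def groupCocycleOfForm (τ : M × M → (M × M →+ V)) (g : Mˣ) (v : M) : V :=
  τ ((↑g⁻¹ : M), 1) (0, v) + τ ((↑g⁻¹ : M), (↑g : M)) ((↑g⁻¹ : M) * v, 0)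

namespace IsSimplicialCocycle

variable {τ : M × M → (M × M →+ V)} (hτ : IsSimplicialCocycle τ)
include hτ

theorem apply_fst (g₁ g₂ g₃ : Mˣ) (x : M) :
    τ (↑g₁, ↑g₂ * ↑g₃) (x, 0) = τ (↑g₁ * ↑g₂, ↑g₃) (x * ↑g₂, 0) + τ (↑g₁, ↑g₂) (x, 0) := by
  have h := hτ g₁ g₂ g₃ (x, 0, 0)
  simp only [mul_zero, add_zero, zero_mul, Prod.mk_zero_zero, map_zero, zero_sub] at h
  linear_combination (norm := abel) h

theorem apply_mid (g₁ g₂ g₃ : Mˣ) (y : M) :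
    τ (↑g₂, ↑g₃) (y, 0) - τ (↑g₁ * ↑g₂, ↑g₃) (↑g₁ * y, 0)
      + τ (↑g₁, ↑g₂ * ↑g₃) (0, y * ↑g₃) - τ (↑g₁, ↑g₂) (0, y) = 0 := by
  simpa using hτ g₁ g₂ g₃ (0, y, 0)

theorem apply_snd (g₁ g₂ g₃ : Mˣ) (z : M) :
    τ (↑g₁ * ↑g₂, ↑g₃) (0, z) = τ (↑g₂, ↑g₃) (0, z) + τ (↑g₁, ↑g₂ * ↑g₃) (0, ↑g₂ * z) := by
  have h := hτ g₁ g₂ g₃ (0, 0, z)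
  simp only [zero_mul, mul_zero, add_zero, zero_add, Prod.mk_zero_zero, map_zero, sub_zero] at h
  linear_combination (norm := abel) -h

theorem apply_one_one_snd (z : M) : τ (1, 1) (0, z) = 0 := by
  simpa using hτ.apply_snd 1 1 1 z

theorem groupCocycleOfForm_eq (g : Mˣ) (v : M) :
    groupCocycleOfForm τ g v = τ (1, ↑g) (v, 0) - τ (↑g, 1) (0, ↑g⁻¹ * v * ↑g) := by
  have hmid := hτ.apply_mid g⁻¹ 1 g v
  have hsnd := hτ.apply_snd g⁻¹ g 1 (↑g⁻¹ * v * ↑g)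
  unfold groupCocycleOfForm
  simp only [Units.val_one, one_mul, mul_one, Units.inv_mul, mul_assoc, Units.mul_inv_cancel_left,
    hτ.apply_one_one_snd] at hmid hsnd ⊢
  linear_combination (norm := abel) -hmid - hsnd

theorem groupCocycleOfForm_mul (g₁ g₂ : Mˣ) (v : M) :
    groupCocycleOfForm τ (g₁ * g₂) v
      = groupCocycleOfForm τ g₁ v + groupCocycleOfForm τ g₂ (↑g₁⁻¹ * v * ↑g₁) := by
  have hfst := hτ.apply_fst 1 g₁ g₂ v
  have hmid := hτ.apply_mid g₁ 1 g₂ (↑g₁⁻¹ * v * ↑g₁)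
  have hsnd := hτ.apply_snd g₁ g₂ 1 (↑g₂⁻¹ * (↑g₁⁻¹ * v * ↑g₁) * ↑g₂)
  simp only [groupCocycleOfForm_eq hτ, Units.val_one, Units.val_mul, mul_inv_rev, one_mul,
    mul_one, mul_assoc, Units.mul_inv_cancel_left] at hfst hmid hsnd ⊢
  linear_combination (norm := abel) hfst - hmid - hsnd

end IsSimplicialCocycle

end

theorem stmt6_general {M : Type*} [Ring M] [Algebra ℝ M]
    {V : Type*} [AddCommGroup V] [Module ℝ V]
    (τ : M × M → (M × M →ₗ[ℝ] V))
    -- the simplicial cocycle condition δτ = 0 on G³, evaluated on tangent vectors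
    (hτ : ∀ (g₁ g₂ g₃ : Mˣ) (u : M × M × M),
      τ ((↑g₂ : M), (↑g₃ : M)) (u.2.1, u.2.2)
        - τ ((↑g₁ : M) * ↑g₂, (↑g₃ : M)) (u.1 * ↑g₂ + ↑g₁ * u.2.1, u.2.2)
        + τ ((↑g₁ : M), (↑g₂ : M) * ↑g₃) (u.1, u.2.1 * ↑g₃ + ↑g₂ * u.2.2)
        - τ ((↑g₁ : M), (↑g₂ : M)) (u.1, u.2.1) = 0) :
    letI κ : Mˣ → M → V := fun g v =>
      τ ((↑g⁻¹ : M), (1 : M)) (0, v) + τ ((↑g⁻¹ : M), (↑g : M)) ((↑g⁻¹ : M) * v, 0)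
    ∀ (g₁ g₂ : Mˣ) (v : M),
      κ (g₁ * g₂) v = κ g₁ v + κ g₂ ((↑g₁⁻¹ : M) * v * ↑g₁) := by
  have hcocycle : IsSimplicialCocycle fun p => (τ p).toAddMonoidHom := hτ
  exact hcocycle.groupCocycleOfForm_mul

theorem stmt6 {M : Type*} [Ring M] [Algebra ℝ M]
    {V : Type*} [AddCommGroup V] [Module ℝ V] [Module.Finite ℝ V]
    (τ : M × M → (M × M →ₗ[ℝ] V))
    -- the simplicial cocycle condition δτ = 0 on G³, evaluated on tangent vectors
    (hτ : ∀ (g₁ g₂ g₃ : Mˣ) (u : M × M × M),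
      τ ((↑g₂ : M), (↑g₃ : M)) (u.2.1, u.2.2)
        - τ ((↑g₁ : M) * ↑g₂, (↑g₃ : M)) (u.1 * ↑g₂ + ↑g₁ * u.2.1, u.2.2)
        + τ ((↑g₁ : M), (↑g₂ : M) * ↑g₃) (u.1, u.2.1 * ↑g₃ + ↑g₂ * u.2.2)
        - τ ((↑g₁ : M), (↑g₂ : M)) (u.1, u.2.1) = 0) :
    letI κ : Mˣ → M → V := fun g v =>
      τ ((↑g⁻¹ : M), (1 : M)) (0, v) + τ ((↑g⁻¹ : M), (↑g : M)) ((↑g⁻¹ : M) * v, 0)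
    ∀ (g₁ g₂ : Mˣ) (v : M),
      κ (g₁ * g₂) v = κ g₁ v + κ g₂ ((↑g₁⁻¹ : M) * v * ↑g₁) :=
  stmt6_general τ hτ
end

section
/- Let G̃ be a Lie group with Lie algebra 𝔤̃, V a finite-dimensional vector space, and κ: G̃ × 𝔤̃ → V smooth, linear in the second variable, satisfying κ(g₁g₂,v) = κ(g₂, Ad(g₁⁻¹)v) + κ(g₁,v). Let ∂₁κ: 𝔤̃ × 𝔤̃ → V be the derivative of κ in the group variable at the identity, i.e. ∂₁κ(u,v) = (d/dt)|₀ κ(exp(tu), v). Then ∂₁κ(Ad(g⁻¹)u, Ad(g⁻¹)v) = ∂₁κ(u,v) − κ(g, [u,v]) for all g ∈ G̃ and u,v ∈ 𝔤̃. -/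
/-!
Since `g⁻¹ exp(tu) g = exp(t Ad(g⁻¹) u)`, applying the cocycle identity twice splits
`κ(exp(t Ad(g⁻¹) u), Ad(g⁻¹) v)` into `κ(g, Ad(exp(-tu)) v) + κ(exp(tu), v) + κ(g⁻¹, Ad(g⁻¹) v)`,
whose derivative at `t = 0` is `-κ(g, [u, v]) + ∂₁κ(u, v)`.
-/

theorem MonoidHom.map_apply_map_inv_apply {G R M : Type*} [Group G] [Semiring R] [AddCommMonoid M]
    [Module R M] (ρ : G →* Module.End R M) (g : G) (v : M) : ρ g (ρ g⁻¹ v) = v := by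
  rw [← Module.End.mul_apply, ← map_mul, mul_inv_cancel, map_one, Module.End.one_apply]

theorem crossedHom_conj_apply {G R M V : Type*} [Group G] [Semiring R] [AddCommMonoid M]
    [Module R M] [AddCommMonoid V] [Module R V] (Ad : G →* Module.End R M) (κ : G → M →ₗ[R] V)
    (hκ : ∀ (g₁ g₂ : G) (v : M), κ (g₁ * g₂) v = κ g₂ (Ad g₁⁻¹ v) + κ g₁ v) (g h : G) (v : M) :
    κ (g⁻¹ * h * g) (Ad g⁻¹ v) = κ g (Ad h⁻¹ v) + κ h v + κ g⁻¹ (Ad g⁻¹ v) := by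
  rw [mul_assoc, hκ, inv_inv, MonoidHom.map_apply_map_inv_apply, hκ]

theorem hasDerivAt_crossedHom_exp_conj {G 𝔤 V : Type*} [Group G] [LieRing 𝔤] [LieAlgebra ℝ 𝔤]
    [NormedAddCommGroup V] [NormedSpace ℝ V] (Ad : G →* Module.End ℝ 𝔤) (exp : 𝔤 → G)
    (hexp_inv : ∀ (u : 𝔤) (t : ℝ), (exp (t • u))⁻¹ = exp ((-t) • u))
    (hconj : ∀ (g : G) (u : 𝔤) (t : ℝ), g⁻¹ * exp (t • u) * g = exp (t • (Ad g⁻¹ u)))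
    (κ : G → (𝔤 →ₗ[ℝ] V))
    (hκ : ∀ (g₁ g₂ : G) (v : 𝔤), κ (g₁ * g₂) v = κ g₂ (Ad g₁⁻¹ v) + κ g₁ v)
    (hAd : ∀ (g : G) (u v : 𝔤),
      HasDerivAt (fun t : ℝ => κ g (Ad (exp (t • u)) v)) (κ g ⁅u, v⁆) 0)
    (g : G) {u v : 𝔤} {d : V} (hd : HasDerivAt (fun t : ℝ => κ (exp (t • u)) v) d 0) :
    HasDerivAt (fun t : ℝ => κ (exp (t • Ad g⁻¹ u)) (Ad g⁻¹ v)) (d - κ g ⁅u, v⁆) 0 := by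
  have hsplit : (fun t : ℝ => κ (exp (t • Ad g⁻¹ u)) (Ad g⁻¹ v)) = fun t =>
      κ g (Ad (exp (t • -u)) v) + κ (exp (t • u)) v + κ g⁻¹ (Ad g⁻¹ v) := by
    funext t
    rw [← hconj, crossedHom_conj_apply Ad κ hκ, hexp_inv, neg_smul, smul_neg]
  rw [hsplit, sub_eq_neg_add, ← map_neg, ← neg_lie]
  exact ((hAd g (-u) v).add hd).add_const _

theorem stmt12_general {G : Type*} [Group G]
    {𝔤 : Type*} [LieRing 𝔤] [LieAlgebra ℝ 𝔤]
    {V : Type*} [NormedAddCommGroup V] [NormedSpace ℝ V]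
    (Ad : G →* Module.End ℝ 𝔤)
    (exp : 𝔤 → G)
    (hexp_inv : ∀ (u : 𝔤) (t : ℝ), (exp (t • u))⁻¹ = exp ((-t) • u))
    (hconj : ∀ (g : G) (u : 𝔤) (t : ℝ), g⁻¹ * exp (t • u) * g = exp (t • (Ad g⁻¹ u)))
    (κ : G → (𝔤 →ₗ[ℝ] V))
    (hκ : ∀ (g₁ g₂ : G) (v : 𝔤), κ (g₁ * g₂) v = κ g₂ (Ad g₁⁻¹ v) + κ g₁ v)
    (hAd : ∀ (g : G) (u v : 𝔤),
      HasDerivAt (fun t : ℝ => κ g (Ad (exp (t • u)) v)) (κ g ⁅u, v⁆) 0)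
    (D : 𝔤 → 𝔤 → V)
    (hD : ∀ u v : 𝔤, HasDerivAt (fun t : ℝ => κ (exp (t • u)) v) (D u v) 0) :
    ∀ (g : G) (u v : 𝔤),
      D (Ad g⁻¹ u) (Ad g⁻¹ v) = D u v - κ g ⁅u, v⁆ := fun g u v =>
  (hD _ _).unique (hasDerivAt_crossedHom_exp_conj Ad exp hexp_inv hconj κ hκ hAd g (hD u v))

theorem stmt12 {G : Type*} [Group G]
    {𝔤 : Type*} [LieRing 𝔤] [LieAlgebra ℝ 𝔤]
    {V : Type*} [NormedAddCommGroup V] [NormedSpace ℝ V] [FiniteDimensional ℝ V]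
    (Ad : G →* Module.End ℝ 𝔤)
    (exp : 𝔤 → G)
    (hexp_inv : ∀ (u : 𝔤) (t : ℝ), (exp (t • u))⁻¹ = exp ((-t) • u))
    (hconj : ∀ (g : G) (u : 𝔤) (t : ℝ), g⁻¹ * exp (t • u) * g = exp (t • (Ad g⁻¹ u)))
    (κ : G → (𝔤 →ₗ[ℝ] V))
    (hκ : ∀ (g₁ g₂ : G) (v : 𝔤), κ (g₁ * g₂) v = κ g₂ (Ad g₁⁻¹ v) + κ g₁ v)
    (hAd : ∀ (g : G) (u v : 𝔤),
      HasDerivAt (fun t : ℝ => κ g (Ad (exp (t • u)) v)) (κ g ⁅u, v⁆) 0)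
    (D : 𝔤 → 𝔤 → V)
    (hD : ∀ u v : 𝔤, HasDerivAt (fun t : ℝ => κ (exp (t • u)) v) (D u v) 0) :
    ∀ (g : G) (u v : 𝔤),
      D (Ad g⁻¹ u) (Ad g⁻¹ v) = D u v - κ g ⁅u, v⁆ :=
  stmt12_general Ad exp hexp_inv hconj κ hκ hAd D hD
end

section
/- Let G̃ be a Lie group with Lie algebra 𝔤̃, V a vector space, and κ: G̃ × 𝔤̃ → V smooth, linear in the second variable, satisfying κ(g₁g₂,v) = κ(g₂, Ad(g₁⁻¹)v) + κ(g₁,v). Define the symmetric bilinear form ⟨u,v⟩ := (1/2)(∂₁κ(u,v) + ∂₁κ(v,u)), where ∂₁κ(u,v) = (d/dt)|₀ κ(exp(tu),v). Then ⟨·,·⟩ is Ad-invariant: ⟨Ad(g)u, Ad(g)v⟩ = ⟨u,v⟩ for all g ∈ G̃, u,v ∈ 𝔤̃. -/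
/-!
Conjugating the one-parameter subgroup `exp (t • u)` by `g` and expanding with the cocycle
identity gives `∂₁κ(Ad g u, Ad g v) = ∂₁κ(u, v) - κ(g⁻¹, [u, v])`. The correction term
is antisymmetric in `u, v`, so it cancels in the symmetrization.
-/

section Cocycle

variable {R G 𝔤 V : Type*} [Semiring R] [Group G] [AddCommMonoid 𝔤] [Module R 𝔤]
  [AddCommMonoid V] [Module R V] {Ad : G →* Module.End R 𝔤} {κ : G → 𝔤 →ₗ[R] V}

theorem cocycle_conj_apply
    (hκ : ∀ (g₁ g₂ : G) (v : 𝔤), κ (g₁ * g₂) v = κ g₂ (Ad g₁⁻¹ v) + κ g₁ v)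
    (g h : G) (v : 𝔤) :
    κ (g * h * g⁻¹) (Ad g v) = κ g⁻¹ (Ad h⁻¹ v) + κ h v + κ g (Ad g v) := by
  have hAd_inv : Ad g⁻¹ (Ad g v) = v := by
    rw [← Module.End.mul_apply, ← map_mul, inv_mul_cancel, map_one, Module.End.one_apply]
  rw [mul_assoc, hκ, hAd_inv, hκ]

end Cocycle

section Derivative

variable {𝕜 G 𝔤 V : Type*} [NontriviallyNormedField 𝕜] [Group G] [AddCommMonoid 𝔤]
  [Module 𝕜 𝔤] [NormedAddCommGroup V] [NormedSpace 𝕜 V] {Ad : G →* Module.End 𝕜 𝔤}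
  {exp : 𝔤 → G} {κ : G → 𝔤 →ₗ[𝕜] V}

theorem hasDerivAt_cocycle_exp_Ad
    (hexp_inv : ∀ (u : 𝔤) (t : 𝕜), (exp (t • u))⁻¹ = exp ((-t) • u))
    (hconj : ∀ (g : G) (u : 𝔤) (t : 𝕜), g⁻¹ * exp (t • u) * g = exp (t • (Ad g⁻¹ u)))
    (hκ : ∀ (g₁ g₂ : G) (v : 𝔤), κ (g₁ * g₂) v = κ g₂ (Ad g₁⁻¹ v) + κ g₁ v)
    {g : G} {u v : 𝔤} {a d : V}
    (hAd : HasDerivAt (fun t : 𝕜 => κ g⁻¹ (Ad (exp (t • u)) v)) a 0)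
    (hd : HasDerivAt (fun t : 𝕜 => κ (exp (t • u)) v) d 0) :
    HasDerivAt (fun t : 𝕜 => κ (exp (t • Ad g u)) (Ad g v)) (d - a) 0 := by
  have hexpand : (fun t : 𝕜 => κ (exp (t • Ad g u)) (Ad g v)) =
      fun t => κ g⁻¹ (Ad (exp ((-t) • u)) v) + κ (exp (t • u)) v + κ g (Ad g v) := by
    funext t
    rw [← inv_inv g, ← hconj, inv_inv, cocycle_conj_apply hκ, hexp_inv]
  have hAd_neg : HasDerivAt (fun t : 𝕜 => κ g⁻¹ (Ad (exp ((-t) • u)) v)) (-a) 0 := by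
    simpa only [zero_sub] using
      HasDerivAt.comp_const_sub (0 : 𝕜) 0 ((sub_zero (0 : 𝕜)).symm ▸ hAd)
  rw [hexpand, sub_eq_neg_add]
  exact (hAd_neg.add hd).add_const (κ g (Ad g v))

end Derivative

theorem stmt13 {G : Type*} [Group G]
    {𝔤 : Type*} [LieRing 𝔤] [LieAlgebra ℝ 𝔤]
    {V : Type*} [NormedAddCommGroup V] [NormedSpace ℝ V]
    (Ad : G →* Module.End ℝ 𝔤)
    (exp : 𝔤 → G)
    (hexp_inv : ∀ (u : 𝔤) (t : ℝ), (exp (t • u))⁻¹ = exp ((-t) • u))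
    (hconj : ∀ (g : G) (u : 𝔤) (t : ℝ), g⁻¹ * exp (t • u) * g = exp (t • (Ad g⁻¹ u)))
    (κ : G → (𝔤 →ₗ[ℝ] V))
    (hκ : ∀ (g₁ g₂ : G) (v : 𝔤), κ (g₁ * g₂) v = κ g₂ (Ad g₁⁻¹ v) + κ g₁ v)
    (hAd : ∀ (g : G) (u v : 𝔤),
      HasDerivAt (fun t : ℝ => κ g (Ad (exp (t • u)) v)) (κ g ⁅u, v⁆) 0)
    (D : 𝔤 → 𝔤 → V)
    (hD : ∀ u v : 𝔤, HasDerivAt (fun t : ℝ => κ (exp (t • u)) v) (D u v) 0) :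
    ∀ (g : G) (u v : 𝔤),
      (2⁻¹ : ℝ) • (D (Ad g u) (Ad g v) + D (Ad g v) (Ad g u))
        = (2⁻¹ : ℝ) • (D u v + D v u) := by
  intro g u v
  have hD_Ad : ∀ u v, D (Ad g u) (Ad g v) = D u v - κ g⁻¹ ⁅u, v⁆ := fun u v =>
    (hD _ _).unique (hasDerivAt_cocycle_exp_Ad hexp_inv hconj hκ (hAd g⁻¹ u v) (hD u v))
  rw [hD_Ad u v, hD_Ad v u, ← lie_skew, map_neg]
  congr 1
  abel
end

section
/- Let (V, J) be a finite-dimensional complex vector space regarded as a real vector space with complex structure J, let 𝔱 be a complex vector space with complex structure J_𝔱 and a real form 𝔱_ℝ (so 𝔱 = 𝔱_ℝ ⊕ J_𝔱 𝔱_ℝ). Then the real-linear map (b, g) ↦ [b − J_𝔱 (g(J·,·))] from (Λ²V* ⊗ 𝔱_ℝ) ⊕ (S^{1,1}V* ⊗ 𝔱_ℝ) to (Λ²V* ⊗ 𝔱) / (Λ^{2,0}V* ⊗ 𝔱) is a linear isomorphism, where S^{1,1}V* ⊗ 𝔱_ℝ denotes 𝔱_ℝ-valued symmetric bilinear forms g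 on V of type (1,1) (i.e. g(Jx,Jy) = g(x,y)), and Λ^{2,0}V* ⊗ 𝔱 denotes alternating forms of type (2,0). -/
/-!
STATEMENT 19: Let (V, J) be a finite-dimensional real vector space with complex structure J,
and 𝔱 a complex vector space (complex structure J_𝔱) with a real form 𝔱_ℝ
(so 𝔱 = 𝔱_ℝ ⊕ J_𝔱 𝔱_ℝ).  Then the map (b, g) ↦ [b − J_𝔱(g(J·,·))] from
(Λ²V* ⊗ 𝔱_ℝ) ⊕ (S^{1,1}V* ⊗ 𝔱_ℝ) to (Λ²V* ⊗ 𝔱)/(Λ^{2,0}V* ⊗ 𝔱) is a linear isomorphism.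

Bilinear forms are represented as `V →ₗ[ℝ] V →ₗ[ℝ] t`.  The isomorphism onto the quotient is
expressed as: for every 𝔱-valued alternating form α there exists a unique pair (b, g) with
b alternating and 𝔱_ℝ-valued, g symmetric of type (1,1) and 𝔱_ℝ-valued, such that the
difference α − (b − J_𝔱 g(J·,·)) is of type (2,0) (for an alternating form ρ this means
ρ(Jx,y) = J_𝔱 ρ(x,y)); the map (b,g) ↦ b − J_𝔱 g(J·,·) is linear by construction.
-/

theorem stmt19 {V t : Type*}
    [AddCommGroup V] [Module ℝ V] [FiniteDimensional ℝ V]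
    [AddCommGroup t] [Module ℝ t]
    (J : V →ₗ[ℝ] V) (hJ : ∀ x, J (J x) = -x)
    (Jt : t →ₗ[ℝ] t) (hJt : ∀ a, Jt (Jt a) = -a)
    (tR : Submodule ℝ t) (hreal : IsCompl tR (tR.map Jt)) :
    ∀ α : V →ₗ[ℝ] V →ₗ[ℝ] t, (∀ x y, α x y = -α y x) →
      ∃! bg : (V →ₗ[ℝ] V →ₗ[ℝ] t) × (V →ₗ[ℝ] V →ₗ[ℝ] t),
        -- b is alternating with values in 𝔱_ℝ
        (∀ x y, bg.1 x y = -bg.1 y x) ∧ (∀ x y, bg.1 x y ∈ tR) ∧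
        -- g is symmetric, of type (1,1), with values in 𝔱_ℝ
        (∀ x y, bg.2 x y = bg.2 y x) ∧ (∀ x y, bg.2 (J x) (J y) = bg.2 x y) ∧
        (∀ x y, bg.2 x y ∈ tR) ∧
        -- α − (b − J_𝔱 g(J·,·)) is of type (2,0)
        (∀ x y, α (J x) y - (bg.1 (J x) y - Jt (bg.2 (J (J x)) y))
              = Jt (α x y - (bg.1 x y - Jt (bg.2 (J x) y)))) := by
  intro α hα
  classical
  set P : t →ₗ[ℝ] t := tR.subtype.comp (tR.linearProjOfIsCompl (tR.map Jt) hreal) with hPdef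
  set Q : t →ₗ[ℝ] t := Jt.comp (P - LinearMap.id) with hQdef
  have hPmem : ∀ a, P a ∈ tR := fun a => (tR.linearProjOfIsCompl (tR.map Jt) hreal a).2
  have hQmem : ∀ a, Q a ∈ tR := by
    intro a
    have h1 : a - P a ∈ tR.map Jt := by
      have := Submodule.projection_add_projection_eq_self hreal a
      have : a - P a = ((tR.map Jt).linearProjOfIsCompl tR hreal.symm a : t) := by
        rw [hPdef]; simp only [LinearMap.comp_apply, Submodule.subtype_apply]
        exact sub_eq_of_eq_add' this.symm
      rw [this]; exact ((tR.map Jt).linearProjOfIsCompl tR hreal.symm a).2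
    obtain ⟨w, hw, hw2⟩ := h1
    have : Q a = w := by
      rw [hQdef]; simp only [LinearMap.comp_apply, LinearMap.sub_apply, LinearMap.id_apply]
      have : P a - a = -(Jt w) := by rw [hw2]; abel
      rw [this, map_neg, hJt, neg_neg]
    rw [this]; exact hw
  have hdecomp : ∀ a, a = P a + Jt (Q a) := by
    intro a
    rw [hQdef]; simp only [LinearMap.comp_apply, LinearMap.sub_apply, LinearMap.id_apply, hJt]
    abel
  have huniq : ∀ u v : t, u ∈ tR → v ∈ tR → u + Jt v = 0 → u = 0 ∧ v = 0 := by
    intro u v hu hv huv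
    have hJv : Jt v ∈ tR.map Jt := ⟨v, hv, rfl⟩
    have hu2 : u ∈ tR.map Jt := by
      have : u = Jt (-v) := by rw [map_neg]; rw [eq_neg_iff_add_eq_zero]; exact huv
      exact this ▸ ⟨-v, neg_mem hv, rfl⟩
    have hu0 : u = 0 := (Submodule.disjoint_def.1 hreal.disjoint) u hu hu2
    have : Jt v = 0 := by rw [hu0, zero_add] at huv; exact huv
    have : Jt (Jt v) = 0 := by rw [this, map_zero]
    rw [hJt] at this
    exact ⟨hu0, by simpa using neg_eq_zero.1 this⟩
  -- the decomposition identity lemma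
  have key : ∀ A B u v w z : t,
      (A - (u - Jt (-w))) - Jt (B - (v - Jt z))
      = (P A + Q B - u + z) + Jt (Q A - P B + v - w) := by
    intro A B u v w z
    have hA := hdecomp A
    have hB := hdecomp B
    conv_lhs => rw [hA, hB]
    simp only [map_add, map_sub, map_neg, hJt]
    abel
  set F : V →ₗ[ℝ] V →ₗ[ℝ] t := ((α ∘ₗ J).compr₂ Q) - (α.compr₂ P) with hFdef
  have hF : ∀ x y, F x y = Q (α (J x) y) - P (α x y) := by
    intro x y
    simp [hFdef, LinearMap.compr₂_apply]
  have hFmem : ∀ x y, F x y ∈ tR := by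
    intro x y; rw [hF]; exact sub_mem (hQmem _) (hPmem _)
  set g₀ : V →ₗ[ℝ] V →ₗ[ℝ] t := (2⁻¹ : ℝ) • (F + F.flip) with hg₀def
  set b₀ : V →ₗ[ℝ] V →ₗ[ℝ] t := (2⁻¹ : ℝ) • (F.flip - F) with hb₀def
  have hg₀ : ∀ x y, g₀ x y = (2⁻¹ : ℝ) • (F x y + F y x) := by
    intro x y; simp [hg₀def]
  have hb₀ : ∀ x y, b₀ x y = (2⁻¹ : ℝ) • (F y x - F x y) := by
    intro x y; simp [hb₀def]
  refine ⟨(b₀, g₀), ⟨?_, ?_, ?_, ?_, ?_, ?_⟩, ?_⟩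
  · intro x y; rw [hb₀ x y, hb₀ y x]; module
  · intro x y; rw [hb₀ x y]
    exact Submodule.smul_mem _ _ (sub_mem (hFmem _ _) (hFmem _ _))
  · intro x y; rw [hg₀ x y, hg₀ y x]; module
  · -- type (1,1)
    intro x y
    rw [hg₀ (J x) (J y), hg₀ x y, hF, hF, hF, hF, hJ, hJ]
    rw [show α (-x) (J y) = -(α x (J y)) by rw [map_neg]; simp,
        show α (-y) (J x) = -(α y (J x)) by rw [map_neg]; simp,
        hα x (J y), hα y (J x), hα (J y) (J x), hα y x]
    simp only [map_neg, neg_neg]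
    module
  · intro x y; rw [hg₀ x y]
    exact Submodule.smul_mem _ _ (add_mem (hFmem _ _) (hFmem _ _))
  · -- the type (2,0) condition
    intro x y
    rw [← sub_eq_zero, hJ, show g₀ (-x) y = -(g₀ x y) by rw [map_neg]; simp,
        key (α (J x) y) (α x y) (b₀ (J x) y) (b₀ x y) (g₀ x y) (g₀ (J x) y)]
    have e1 : g₀ (J x) y - b₀ (J x) y = F (J x) y := by
      rw [hg₀, hb₀]; module
    have e2 : g₀ x y - b₀ x y = F x y := by rw [hg₀, hb₀]; module
    have e3 : F (J x) y = -(Q (α x y)) - P (α (J x) y) := by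
      rw [hF, hJ, show α (-x) y = -(α x y) by rw [map_neg]; simp, map_neg]
    calc (P (α (J x) y) + Q (α x y) - b₀ (J x) y + g₀ (J x) y)
          + Jt (Q (α (J x) y) - P (α x y) + b₀ x y - g₀ x y)
        = (P (α (J x) y) + Q (α x y) + (g₀ (J x) y - b₀ (J x) y))
          + Jt (Q (α (J x) y) - P (α x y) - (g₀ x y - b₀ x y)) := by
          simp only [map_sub, map_add]; abel
      _ = 0 := by
          rw [e1, e2, e3, hF]
          simp only [map_sub, map_add, map_neg]
          abel
  · -- uniqueness
    rintro ⟨b, g⟩ ⟨h1, h2, h3, h4, h5, h6⟩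
    have hgb : ∀ x y, g x y - b x y = F x y := by
      intro x y
      have hE := h6 x y
      rw [hJ, show g (-x) y = -(g x y) by rw [map_neg]; simp] at hE
      have h0 : (α (J x) y - (b (J x) y - Jt (-(g x y))))
          - Jt (α x y - (b x y - Jt (g (J x) y))) = 0 := sub_eq_zero.2 hE
      rw [key (α (J x) y) (α x y) (b (J x) y) (b x y) (g x y) (g (J x) y)] at h0
      have hm1 : P (α (J x) y) + Q (α x y) - b (J x) y + g (J x) y ∈ tR :=
        add_mem (sub_mem (add_mem (hPmem _) (hQmem _)) (h2 _ _)) (h5 _ _)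
      have hm2 : Q (α (J x) y) - P (α x y) + b x y - g x y ∈ tR :=
        sub_mem (add_mem (sub_mem (hQmem _) (hPmem _)) (h2 _ _)) (h5 _ _)
      have hz := (huniq _ _ hm1 hm2 h0).2
      rw [hF]
      have : (g x y - b x y) - (Q (α (J x) y) - P (α x y))
          = -(Q (α (J x) y) - P (α x y) + b x y - g x y) := by abel
      rw [← sub_eq_zero, this, hz, neg_zero]
    have e1 : ∀ x y, g x y - b x y = F x y := hgb
    have e2 : ∀ x y, g x y + b x y = F y x := by
      intro x y
      have := hgb y x
      rw [h3 y x, h1 y x] at this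
      rw [← this]; abel
    rw [Prod.mk.injEq]
    constructor
    · apply LinearMap.ext; intro x; apply LinearMap.ext; intro y
      calc b x y = (2⁻¹ : ℝ) • ((g x y + b x y) - (g x y - b x y)) := by module
        _ = (2⁻¹ : ℝ) • (F y x - F x y) := by rw [e1 x y, e2 x y]
        _ = b₀ x y := (hb₀ x y).symm
    · apply LinearMap.ext; intro x; apply LinearMap.ext; intro y
      calc g x y = (2⁻¹ : ℝ) • ((g x y + b x y) + (g x y - b x y)) := by module
        _ = (2⁻¹ : ℝ) • (F y x + F x y) := by rw [e1 x y, e2 x y]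
        _ = g₀ x y := by rw [hg₀ x y]; module
end
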